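/- arXiv:1805.08891 — 4 statements merged into one kernel-verified Lean document; each statement's English description precedes it below -/
import Mathlib

section
/- One-step coarse-graining increases discrete differential entropy: Let S satisfy strong subadditivity. Given subsets R_1,…,R_n of an index set (indices cyclic mod n) and shrunken subsets R̃_i ⊆ R_i such that for each i the sets R_i \ R_{i+1}, R̃_i ∩ R̃_{i+1}, and R_i \ R̃_i are pairwise disjoint with union R_i, and R_i ∩ R_{i+1} = (R̃_i ∩ R̃_{i+1}) ∪ (R_i \ R̃_i) and R̃_i = (R_i \ R_{i+1}) ∪ (R̃_i ∩ R̃_{i+1}), then Σ_i [S(R_i) − S(R_i ∩ R_{i+1})] ≤ Σ_i [S(R̃_i) − S(R̃_i ∩ R̃_{i+1})]. -/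
/-!
The inequality holds term by term: strong subadditivity applied to
`A = R i \ R (i + 1)`, `B = Rt i ∩ Rt (i + 1)`, `C = R i \ Rt i` reads
`S (R i) + S (Rt i ∩ Rt (i + 1)) ≤ S (Rt i) + S (R i ∩ R (i + 1))`.
-/

open Finset

theorem sub_le_sub_of_strong_subadditive {ι : Type*} [DecidableEq ι] {S : Finset ι → ℝ}
    (hSSA : ∀ A B C : Finset ι, Disjoint A B → Disjoint B C → Disjoint A C →
      S (A ∪ B ∪ C) + S B ≤ S (A ∪ B) + S (C ∪ B))
    {A B C X Y Z : Finset ι} (hAB : Disjoint A B) (hBC : Disjoint B C) (hAC : Disjoint A C)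
    (hX : A ∪ B ∪ C = X) (hY : Y = B ∪ C) (hZ : Z = A ∪ B) :
    S X - S Y ≤ S Z - S B := by
  have h := hSSA A B C hAB hBC hAC
  rw [hX, union_comm C B, ← hY, ← hZ] at h
  linarith

theorem discrete_diff_entropy_increase_general {ι : Type*} [DecidableEq ι]
    (S : Finset ι → ℝ)
    (hSSA : ∀ A B C : Finset ι, Disjoint A B → Disjoint B C → Disjoint A C →
      S (A ∪ B ∪ C) + S B ≤ S (A ∪ B) + S (C ∪ B))
    (n : ℕ) [NeZero n] (R Rt : ZMod n → Finset ι)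
    (hAB : ∀ i, Disjoint (R i \ R (i + 1)) (Rt i ∩ Rt (i + 1)))
    (hBC : ∀ i, Disjoint (Rt i ∩ Rt (i + 1)) (R i \ Rt i))
    (hAC : ∀ i, Disjoint (R i \ R (i + 1)) (R i \ Rt i))
    (hunion : ∀ i, (R i \ R (i + 1)) ∪ (Rt i ∩ Rt (i + 1)) ∪ (R i \ Rt i) = R i)
    (hint : ∀ i, R i ∩ R (i + 1) = (Rt i ∩ Rt (i + 1)) ∪ (R i \ Rt i))
    (hRt : ∀ i, Rt i = (R i \ R (i + 1)) ∪ (Rt i ∩ Rt (i + 1))) :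
    ∑ i : ZMod n, (S (R i) - S (R i ∩ R (i + 1))) ≤
      ∑ i : ZMod n, (S (Rt i) - S (Rt i ∩ Rt (i + 1))) :=
  sum_le_sum fun i _ => sub_le_sub_of_strong_subadditive hSSA (hAB i) (hBC i) (hAC i)
    (hunion i) (hint i) (hRt i)

/-- One-step coarse-graining increases discrete differential entropy.
Regions `R i` and shrunken regions `Rt i ⊆ R i` are indexed cyclically by `ZMod n`.
For each `i`, with `A = R i \ R (i+1)`, `B = Rt i ∩ Rt (i+1)`, `C = R i \ Rt i`
pairwise disjoint with union `R i`, and `R i ∩ R (i+1) = B ∪ C`, `Rt i = A ∪ B`,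
strong subadditivity of `S` implies the discrete differential entropy does not
decrease when passing from `{R i}` to `{Rt i}`. -/
theorem discrete_diff_entropy_increase {ι : Type*} [DecidableEq ι]
    (S : Finset ι → ℝ)
    (hSSA : ∀ A B C : Finset ι, Disjoint A B → Disjoint B C → Disjoint A C →
      S (A ∪ B ∪ C) + S B ≤ S (A ∪ B) + S (C ∪ B))
    (n : ℕ) [NeZero n] (R Rt : ZMod n → Finset ι)
    (hsub : ∀ i, Rt i ⊆ R i)
    (hAB : ∀ i, Disjoint (R i \ R (i + 1)) (Rt i ∩ Rt (i + 1)))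
    (hBC : ∀ i, Disjoint (Rt i ∩ Rt (i + 1)) (R i \ Rt i))
    (hAC : ∀ i, Disjoint (R i \ R (i + 1)) (R i \ Rt i))
    (hunion : ∀ i, (R i \ R (i + 1)) ∪ (Rt i ∩ Rt (i + 1)) ∪ (R i \ Rt i) = R i)
    (hint : ∀ i, R i ∩ R (i + 1) = (Rt i ∩ Rt (i + 1)) ∪ (R i \ Rt i))
    (hRt : ∀ i, Rt i = (R i \ R (i + 1)) ∪ (Rt i ∩ Rt (i + 1))) :
    ∑ i : ZMod n, (S (R i) - S (R i ∩ R (i + 1))) ≤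
      ∑ i : ZMod n, (S (Rt i) - S (Rt i ∩ Rt (i + 1))) :=
  discrete_diff_entropy_increase_general S hSSA n R Rt hAB hBC hAC hunion hint hRt
end

section
/- Signature criterion for the hypersurface swept out by the mixed-signature differential entropy curves: writing sgn(χ²) = sgn[6 sin²(Δv/2) + sin²((Δu + Δv)/2) − 2 sin²(Δu/2)], the quantity 6 sin²(Δv/2) + sin²((Δu+Δv)/2) − 2 sin²(Δu/2) is positive for Δu sufficiently close to 0 and to 2π − |Δv|, and there exists Δu ∈ (0, 2π − |Δv|) where it is negative if and only if −2 arcsin(√2/3) < Δv < 0 (for Δv ∈ (−2π, 0)). -/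
open Real Set

/-!
Half-angle formulas turn the bracket, with `c = cos Δv` and `s = sin Δv`, into the harmonic
`5/2 - 3c + (1 - c/2) cos Δu + (s/2) sin Δu` of amplitude `√(5/4 - c)`. Its global minimum
`5/2 - 3c - √(5/4 - c)` is negative iff `5/9 < c`, i.e. iff `|Δv|` is below
`2 arcsin (√2/3)` or above `2π - 2 arcsin (√2/3)`. In the first case the minimiser
`π + arctan (s / (2 - c))` lies in `(π/2, π) ⊆ (0, 2π - |Δv|)`. In the second the whole interval
lies in `[0, π]`, where `cos Δu ≥ cos Δv` keeps the bracket above `2 (1 - c) > 0`. The endpoint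
values `7 sin² (Δv/2)` and `4 sin² (Δv/2) + sin² Δv` are positive, which gives positivity near
both ends by continuity.
-/

theorem Real.neg_sqrt_le_mul_cos_add_mul_sin (A B u : ℝ) :
    -√(A ^ 2 + B ^ 2) ≤ A * cos u + B * sin u := by
  refine neg_le_of_abs_le (abs_le_sqrt ?_)
  nlinarith [sq_nonneg (A * sin u - B * cos u), sin_sq_add_cos_sq u]

theorem Real.mul_cos_add_mul_sin_pi_add_arctan {A : ℝ} (hA : 0 < A) (B : ℝ) :
    A * cos (π + arctan (B / A)) + B * sin (π + arctan (B / A)) = -√(A ^ 2 + B ^ 2) := by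
  have hR : √(1 + (B / A) ^ 2) = √(A ^ 2 + B ^ 2) / A := by
    rw [eq_div_iff hA.ne', ← sqrt_sq hA.le, ← sqrt_mul (by positivity), sqrt_sq hA.le]
    congr 1
    field_simp
  rw [cos_add, sin_add, cos_pi, sin_pi, cos_arctan, sin_arctan, hR]
  field_simp
  rw [sq_sqrt (by positivity)]
  ring

theorem ContinuousAt.exists_forall_Ioo_pos {f : ℝ → ℝ} {x : ℝ} (hf : ContinuousAt f x)
    (hx : 0 < f x) : ∃ ε > 0, ∀ y ∈ Ioo (x - ε) (x + ε), 0 < f y := by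
  simpa only [Metric.eventually_nhds_iff_ball, Real.ball_eq_Ioo] using
    hf.eventually (lt_mem_nhds hx)

theorem Real.sin_sq_half (x : ℝ) : sin (x / 2) ^ 2 = (1 - cos x) / 2 := by
  rw [sin_sq_eq_half_sub, mul_div_cancel₀ _ two_ne_zero]
  ring

/-- The bracket whose sign is the sign of `χ²` on `H±`. -/
noncomputable def chiSq (v u : ℝ) : ℝ :=
  6 * sin (v / 2) ^ 2 + sin ((u + v) / 2) ^ 2 - 2 * sin (u / 2) ^ 2

theorem continuous_chiSq (v : ℝ) : Continuous (chiSq v) := by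
  unfold chiSq
  fun_prop

theorem chiSq_eq_cos (v u : ℝ) : chiSq v u = 5 / 2 - 3 * cos v + cos u - cos (u + v) / 2 := by
  simp only [chiSq, sin_sq_half]
  ring

theorem chiSq_eq_harmonic (v u : ℝ) :
    chiSq v u = 5 / 2 - 3 * cos v + ((1 - cos v / 2) * cos u + sin v / 2 * sin u) := by
  rw [chiSq_eq_cos, cos_add]
  ring

theorem chiSq_amplitude_sq (v : ℝ) : (1 - cos v / 2) ^ 2 + (sin v / 2) ^ 2 = 5 / 4 - cos v := by
  linear_combination sin_sq_add_cos_sq v / 4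

theorem chiSq_zero (v : ℝ) : chiSq v 0 = 7 * sin (v / 2) ^ 2 := by
  simp only [chiSq, zero_add, zero_div, sin_zero]
  ring

theorem chiSq_two_pi_add (v : ℝ) : chiSq v (2 * π + v) = 4 * sin (v / 2) ^ 2 + sin v ^ 2 := by
  have h₁ : (2 * π + v + v) / 2 = v + π := by ring
  have h₂ : (2 * π + v) / 2 = v / 2 + π := by ring
  simp only [chiSq, h₁, h₂, sin_add_pi, neg_sq]
  ring

theorem sub_le_chiSq (v u : ℝ) : 5 / 2 - 3 * cos v - √(5 / 4 - cos v) ≤ chiSq v u := by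
  rw [chiSq_eq_harmonic, ← chiSq_amplitude_sq, sub_eq_add_neg _ (√_)]
  gcongr
  exact neg_sqrt_le_mul_cos_add_mul_sin _ _ _

theorem chiSq_pi_add_arctan (v : ℝ) :
    chiSq v (π + arctan (sin v / 2 / (1 - cos v / 2))) =
      5 / 2 - 3 * cos v - √(5 / 4 - cos v) := by
  have hA : 0 < 1 - cos v / 2 := by linarith [cos_le_one v]
  rw [chiSq_eq_harmonic, mul_cos_add_mul_sin_pi_add_arctan hA, chiSq_amplitude_sq]
  ring

theorem Real.cos_lt_one_of_mem_Ioo {x : ℝ} (hx : x ∈ Ioo (-(2 * π)) 0) : cos x < 1 :=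
  (cos_le_one x).lt_of_ne fun h =>
    hx.2.ne ((cos_eq_one_iff_of_lt_of_lt hx.1 (by linarith [hx.2, pi_pos])).mp h)

theorem chiSq_pos_of_le_neg_pi {v u : ℝ} (hv : v ∈ Ioc (-(2 * π)) (-π))
    (hu : u ∈ Icc 0 (2 * π + v)) : 0 < chiSq v u := by
  have hcos_u : cos v ≤ cos u := by
    rw [← cos_add_two_pi, add_comm]
    exact cos_le_cos_of_nonneg_of_le_pi hu.1 (by linarith [hv.2]) hu.2
  rw [chiSq_eq_cos]
  linarith [cos_le_one (u + v), cos_lt_one_of_mem_Ioo ⟨hv.1, by linarith [hv.2, pi_pos]⟩]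

theorem five_halves_sub_three_mul_lt_sqrt_iff {c : ℝ} (hc : c < 1) :
    5 / 2 - 3 * c < √(5 / 4 - c) ↔ 5 / 9 < c := by
  constructor
  · intro h
    by_contra! hc'
    refine h.not_ge (sqrt_le_iff.mpr ⟨by linarith, ?_⟩)
    nlinarith [mul_nonneg (by linarith : (0 : ℝ) ≤ 5 - 9 * c) (by linarith : (0 : ℝ) ≤ 1 - c)]
  · intro hc'
    refine lt_sqrt_of_sq_lt ?_
    nlinarith [mul_pos (by linarith : (0 : ℝ) < 9 * c - 5) (by linarith : (0 : ℝ) < 1 - c)]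

theorem cos_two_arcsin_sqrt_two_div_three : cos (2 * arcsin (√2 / 3)) = 5 / 9 := by
  rw [cos_two_mul_eq_one_sub, sin_arcsin (by linarith [sqrt_nonneg 2]) ?_, div_pow,
    sq_sqrt zero_le_two]
  · norm_num
  · nlinarith [sq_sqrt zero_le_two, sqrt_nonneg 2]

theorem five_ninths_lt_cos_iff {v : ℝ} (hv : v ∈ Icc (-π) 0) :
    5 / 9 < cos v ↔ -(2 * arcsin (√2 / 3)) < v := by
  have hα : 2 * arcsin (√2 / 3) ∈ Icc 0 π :=
    ⟨mul_nonneg zero_le_two (arcsin_nonneg.mpr (by positivity)),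
      by linarith [arcsin_le_pi_div_two (√2 / 3)]⟩
  rw [← cos_neg v, ← cos_two_arcsin_sqrt_two_div_three,
    strictAntiOn_cos.lt_iff_gt hα ⟨by linarith [hv.2], by linarith [hv.1]⟩, neg_lt]

theorem exists_chiSq_neg {v : ℝ} (hv : v ∈ Ioo (-π) 0) (hc : 5 / 9 < cos v) :
    ∃ u ∈ Ioo 0 (2 * π + v), chiSq v u < 0 := by
  have hsin : sin v < 0 := sin_neg_of_neg_of_neg_pi_lt hv.2 hv.1
  have hA : 0 < 1 - cos v / 2 := by linarith [cos_le_one v]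
  have harctan : arctan (sin v / 2 / (1 - cos v / 2)) < 0 :=
    arctan_lt_zero.mpr (div_neg_of_neg_of_pos (by linarith) hA)
  have hmin := (five_halves_sub_three_mul_lt_sqrt_iff
    (cos_lt_one_of_mem_Ioo ⟨by linarith [hv.1, pi_pos], hv.2⟩)).mpr hc
  refine ⟨π + arctan (sin v / 2 / (1 - cos v / 2)), ⟨?_, by linarith [hv.1]⟩, ?_⟩
  · linarith [neg_pi_div_two_lt_arctan (sin v / 2 / (1 - cos v / 2)), pi_pos]
  · rw [chiSq_pi_add_arctan]
    linarith

theorem five_ninths_lt_cos_of_chiSq_neg {v u : ℝ} (hv : v ∈ Ioo (-(2 * π)) 0)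
    (hu : u ∈ Ioo 0 (2 * π + v)) (hneg : chiSq v u < 0) : -π < v ∧ 5 / 9 < cos v := by
  have hπ : -π < v := by
    by_contra! h
    exact hneg.not_gt (chiSq_pos_of_le_neg_pi ⟨hv.1, h⟩ (Ioo_subset_Icc_self hu))
  refine ⟨hπ, (five_halves_sub_three_mul_lt_sqrt_iff (cos_lt_one_of_mem_Ioo hv)).mp ?_⟩
  linarith [sub_le_chiSq v u]

/-- Signature criterion for the hypersurface swept out by the mixed-signature
differential-entropy curves.  With
`g(Δu) = 6 sin²(Δv/2) + sin²((Δu+Δv)/2) − 2 sin²(Δu/2)` and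
`Δv ∈ (−2π, 0)` fixed: `g` is positive for `Δu` sufficiently close to `0` and
to `2π − |Δv|`, and there exists `Δu ∈ (0, 2π − |Δv|)` where `g` is negative
if and only if `−2 arcsin(√2/3) < Δv`. -/
theorem signature_criterion (Δv : ℝ) (hv : Δv ∈ Ioo (-(2 * π)) (0 : ℝ)) :
    (∃ ε > 0, ∀ Δu ∈ Ioo (0 : ℝ) ε,
        0 < 6 * sin (Δv / 2) ^ 2 + sin ((Δu + Δv) / 2) ^ 2 - 2 * sin (Δu / 2) ^ 2) ∧
    (∃ ε > 0, ∀ Δu ∈ Ioo (2 * π - |Δv| - ε) (2 * π - |Δv|),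
        0 < 6 * sin (Δv / 2) ^ 2 + sin ((Δu + Δv) / 2) ^ 2 - 2 * sin (Δu / 2) ^ 2) ∧
    ((∃ Δu ∈ Ioo (0 : ℝ) (2 * π - |Δv|),
        6 * sin (Δv / 2) ^ 2 + sin ((Δu + Δv) / 2) ^ 2 - 2 * sin (Δu / 2) ^ 2 < 0)
      ↔ -(2 * arcsin (Real.sqrt 2 / 3)) < Δv) := by
  have hL : 2 * π - |Δv| = 2 * π + Δv := by rw [abs_of_neg hv.2, sub_neg_eq_add]
  have hsin : sin (Δv / 2) ≠ 0 :=
    (sin_neg_of_neg_of_neg_pi_lt (by linarith [hv.2]) (by linarith [hv.1])).ne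
  obtain ⟨ε₀, hε₀, h₀⟩ := (continuous_chiSq Δv).continuousAt.exists_forall_Ioo_pos
    (x := 0) (by rw [chiSq_zero]; positivity)
  obtain ⟨ε₁, hε₁, h₁⟩ := (continuous_chiSq Δv).continuousAt.exists_forall_Ioo_pos
    (x := 2 * π + Δv) (by rw [chiSq_two_pi_add]; positivity)
  rw [hL]
  refine ⟨⟨ε₀, hε₀, fun u hu => h₀ u ⟨by linarith [hu.1], by linarith [hu.2]⟩⟩,
    ⟨ε₁, hε₁, fun u hu => h₁ u ⟨hu.1, by linarith [hu.2]⟩⟩, ⟨?_, ?_⟩⟩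
  · rintro ⟨u, hu, hneg⟩
    obtain ⟨hπ, hc⟩ := five_ninths_lt_cos_of_chiSq_neg hv hu hneg
    exact (five_ninths_lt_cos_iff ⟨hπ.le, hv.2.le⟩).mp hc
  · intro h
    have hπ : -π < Δv := by linarith [arcsin_le_pi_div_two (√2 / 3)]
    exact exists_chiSq_neg ⟨hπ, hv.2⟩ ((five_ninths_lt_cos_iff ⟨hπ.le, hv.2.le⟩).mpr h)
end

section
/- In a time-oriented Lorentzian manifold, if a hypersurface H is foliated by compact codimension-two surfaces σ(r) such that σ(r₂) is never timelike-separated from σ(r₁) for r₂ > r₁, then the normal vector field h^a within H pointing in the direction of increasing r is nowhere timelike. -/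
/-! The difference quotients `(γ s - γ r)/(s - r)` are non-timelike: the separation hypothesis
makes `γ s - γ r` non-timelike, and the non-timelike vectors form a cone stable under scaling
by any real, including negative ones. That cone is closed, so the limit `γ'(r)` lies in it too. -/

open Filter Topology

def nonTimelikeCone (E : Type*) [SeminormedAddCommGroup E] : Set (ℝ × E) :=
  {v | |v.1| ≤ ‖v.2‖}

section nonTimelikeCone

variable {E : Type*} [SeminormedAddCommGroup E]

theorem isClosed_nonTimelikeCone : IsClosed (nonTimelikeCone E) :=
  isClosed_le (by fun_prop) (by fun_prop)

theorem neg_mem_nonTimelikeCone {v : ℝ × E} (hv : v ∈ nonTimelikeCone E) :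
    -v ∈ nonTimelikeCone E := by
  simpa [nonTimelikeCone] using hv

theorem smul_mem_nonTimelikeCone [NormedSpace ℝ E] (c : ℝ) {v : ℝ × E}
    (hv : v ∈ nonTimelikeCone E) : c • v ∈ nonTimelikeCone E := by
  simp only [nonTimelikeCone, Set.mem_ofPred_eq, Prod.smul_fst, Prod.smul_snd, smul_eq_mul,
    abs_mul, norm_smul, Real.norm_eq_abs]
  exact mul_le_mul_of_nonneg_left hv (abs_nonneg c)

theorem sub_mem_nonTimelikeCone_of_ne {σ : ℝ → Set (ℝ × E)}
    (hsep : ∀ r₁ r₂, r₁ < r₂ → ∀ p ∈ σ r₁, ∀ q ∈ σ r₂, ¬ ‖q.2 - p.2‖ < |q.1 - p.1|)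
    {r s : ℝ} (hrs : r ≠ s) {p q : ℝ × E} (hp : p ∈ σ r) (hq : q ∈ σ s) :
    q - p ∈ nonTimelikeCone E := by
  obtain hlt | hgt := hrs.lt_or_gt
  · exact not_lt.mp (hsep r s hlt p hp q hq)
  · simpa using neg_mem_nonTimelikeCone (v := p - q) (not_lt.mp (hsep s r hgt q hq p hp))

end nonTimelikeCone

theorem HasDerivAt.mem_of_eventually_slope_mem {F : Type*} [NormedAddCommGroup F]
    [NormedSpace ℝ F] {f : ℝ → F} {f' : F} {r : ℝ} {C : Set F} (hf : HasDerivAt f f' r)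
    (hC : IsClosed C) (hslope : ∀ᶠ s in 𝓝[≠] r, slope f r s ∈ C) : f' ∈ C :=
  hC.mem_of_tendsto (hasDerivAt_iff_tendsto_slope.mp hf) hslope

theorem foliation_flow_not_timelike_general {E : Type*} [NormedAddCommGroup E]
    [InnerProductSpace ℝ E]
    (σ : ℝ → Set (ℝ × E))
    (hsep : ∀ r₁ r₂, r₁ < r₂ → ∀ p ∈ σ r₁, ∀ q ∈ σ r₂, ¬ ‖q.2 - p.2‖ < |q.1 - p.1|)
    (γ : ℝ → ℝ × E) (hγ : Differentiable ℝ γ) (hmem : ∀ r, γ r ∈ σ r) :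
    ∀ r, |(deriv γ r).1| ≤ ‖(deriv γ r).2‖ := by
  intro r
  refine (hγ r).hasDerivAt.mem_of_eventually_slope_mem isClosed_nonTimelikeCone ?_
  filter_upwards [self_mem_nhdsWithin] with s hs
  rw [slope_def_module]
  exact smul_mem_nonTimelikeCone _
    (sub_mem_nonTimelikeCone_of_ne hsep (Ne.symm hs) (hmem r) (hmem s))

/-- If a hypersurface in Minkowski spacetime `ℝ × E` (time × space, with two
points timelike-separated iff `‖Δx‖ < |Δt|`) is foliated by compact
codimension-two leaves `σ(r)` such that no point of `σ(r₂)` is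
timelike-separated from any point of `σ(r₁)` for `r₂ > r₁`, then the normal
flow field within the hypersurface in the direction of increasing `r`
(the velocity of any differentiable curve `γ` with `γ(r) ∈ σ(r)`) is nowhere
timelike: `|(γ'(r))_t| ≤ ‖(γ'(r))_x‖`. -/
theorem foliation_flow_not_timelike {E : Type*} [NormedAddCommGroup E]
    [InnerProductSpace ℝ E]
    (σ : ℝ → Set (ℝ × E)) (hcpt : ∀ r, IsCompact (σ r))
    (hsep : ∀ r₁ r₂, r₁ < r₂ → ∀ p ∈ σ r₁, ∀ q ∈ σ r₂, ¬ ‖q.2 - p.2‖ < |q.1 - p.1|)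
    (γ : ℝ → ℝ × E) (hγ : Differentiable ℝ γ) (hmem : ∀ r, γ r ∈ σ r) :
    ∀ r, |(deriv γ r).1| ≤ ‖(deriv γ r).2‖ :=
  foliation_flow_not_timelike_general σ hsep γ hγ hmem
end

section
/- Discriminant sign computation: treating 6 sin²(Δv/2) + sin²((Δu + Δv)/2) − 2 sin²(Δu/2) = 0 as a quadratic equation in X = sin²(Δu/2) (after expanding sin²((Δu+Δv)/2) using angle-addition and expressing in terms of X and fixed Δv), the sign of the discriminant of this quadratic equals the sign of 2 − 9 sin²(Δv/2). -/
open Real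

/-!
Writing `s = sin (Δv/2)`, `c = cos (Δv/2)` and `sin Δv = 2 s c`, the discriminant is a polynomial
in `s` and `c` which, modulo `s² + c² = 1`, factors as `64 (s² c)² (2 - 9 s²)`. The prefactor is
positive as long as neither `s` nor `c` vanishes.
-/

lemma Real.sign_mul_of_pos_left {k : ℝ} (hk : 0 < k) (x : ℝ) : Real.sign (k * x) = Real.sign x := by
  rcases lt_trichotomy x 0 with hx | rfl | hx
  · rw [Real.sign_of_neg hx, Real.sign_of_neg (mul_neg_of_pos_of_neg hk hx)]
  · rw [mul_zero]
  · rw [Real.sign_of_pos hx, Real.sign_of_pos (mul_pos hk hx)]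

lemma discrim_eq_of_sq_add_sq_eq_one {R : Type*} [CommRing R] {s c : R} (h : s ^ 2 + c ^ 2 = 1) :
    discrim ((1 + 2 * s ^ 2) ^ 2 + (2 * s * c) ^ 2) (-(14 * s ^ 2 * (1 + 2 * s ^ 2) + (2 * s * c) ^ 2))
      (49 * s ^ 4) = 64 * (s ^ 2 * c) ^ 2 * (2 - 9 * s ^ 2) := by
  rw [discrim]
  linear_combination 16 * s ^ 4 * c ^ 2 * h

/-- Discriminant sign computation: treating the vanishing condition
`6 sin²(Δv/2) + sin²((Δu+Δv)/2) − 2 sin²(Δu/2) = 0` as a quadratic in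
`X = sin²(Δu/2)` (after expanding by angle addition, isolating the square root
and squaring, one gets `a X² + b X + c = 0` with the coefficients below), the
sign of its discriminant equals the sign of `2 − 9 sin²(Δv/2)`. -/
theorem discriminant_sign (Δv : ℝ)
    (hs : Real.sin (Δv / 2) ≠ 0) (hc : Real.cos (Δv / 2) ≠ 0)
    (a b c : ℝ)
    (ha : a = (1 + 2 * sin (Δv / 2) ^ 2) ^ 2 + sin Δv ^ 2)
    (hb : b = -(14 * sin (Δv / 2) ^ 2 * (1 + 2 * sin (Δv / 2) ^ 2) + sin Δv ^ 2))
    (hc' : c = 49 * sin (Δv / 2) ^ 4) :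
    Real.sign (b ^ 2 - 4 * a * c) = Real.sign (2 - 9 * sin (Δv / 2) ^ 2) := by
  have hsin : sin Δv = 2 * sin (Δv / 2) * cos (Δv / 2) := by
    rw [← sin_two_mul, mul_div_cancel₀ _ two_ne_zero]
  subst ha hb hc'
  rw [← discrim, hsin, discrim_eq_of_sq_add_sq_eq_one (sin_sq_add_cos_sq _)]
  exact Real.sign_mul_of_pos_left (by positivity) _
end
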